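/- arXiv:2301.03176 — 2 statements merged into one kernel-verified Lean document; each statement's English description precedes it below -/
import Mathlib

section
/- For every natural number p and every real λ with |λ| < 1, one has Σ_{n=0}^∞ (n)_{p,λ} T_n(1) = Σ_{k=0}^p S_{2,λ}(p,k) ((1)_{k+1,λ}/(k+1)) (1+λ)^{−(k+1)} e_λ(1), where the series on the left converges. -/
noncomputable section

/-- Generalized falling factorial `(x)_{n,λ} = x(x-λ)⋯(x-(n-1)λ)`, with `(x)_{0,λ} = 1`. -/
def dff (lam x : ℝ) (n : ℕ) : ℝ := ∏ i ∈ Finset.range n, (x - i * lam)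

/-- Degenerate exponential `e_λ(y) = ∑_{n=0}^∞ (1)_{n,λ} y^n / n!`. -/
def dexp (lam y : ℝ) : ℝ := ∑' n : ℕ, dff lam 1 n * y ^ n / n.factorial

/-- Truncated degenerate exponential tail
`T_n(y) = e_λ(y) - ∑_{k=0}^n (1)_{k,λ} y^k / k!`. -/
def dtail (lam y : ℝ) (n : ℕ) : ℝ :=
  dexp lam y - ∑ k ∈ Finset.range (n + 1), dff lam 1 k * y ^ k / k.factorial

/-- Degenerate Stirling number of the second kind
`S_{2,λ}(n,k) = (1/k!) ∑_{j=0}^k (-1)^{k-j} C(k,j) (j)_{n,λ}`. -/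
def dStirling (lam : ℝ) (n k : ℕ) : ℝ :=
  (1 / (k.factorial : ℝ)) *
    ∑ j ∈ Finset.range (k + 1), (-1 : ℝ) ^ (k - j) * (k.choose j : ℝ) * dff lam j n

/-!
Write `a_m = (1)_{m,λ}/m!`, so that `T_n(1) = ∑_{m>n} a_m` and the series is the double sum
`∑_{n<m} (n)_{p,λ} a_m`; it converges absolutely by the ratio test, as
`(1 - mλ)/(m+1) → -λ` and `|λ| < 1`.
Summing over `n` first, Newton's forward-difference formula gives
`(n)_{p,λ} = ∑_k S_{2,λ}(p,k) k! C(n,k)`, and the hockey-stick identity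
`∑_{n<m} C(n,k) = C(m,k+1)`. Finally `∑_m C(m,j) a_m = (1)_{j,λ}/j! · e_λ^{1-jλ}(1)`, and
`e_λ^{x+λ}(1) = (1+λ) e_λ^x(1)` turns the last factor into `(1+λ)^{-j} e_λ(1)`.
-/

open Finset Polynomial Filter Topology
open scoped Nat

lemma dff_zero (lam x : ℝ) : dff lam x 0 = 1 := prod_range_zero _

lemma dff_succ (lam x : ℝ) (n : ℕ) : dff lam x (n + 1) = dff lam x n * (x - n * lam) :=
  prod_range_succ _ _

lemma dff_add (lam x : ℝ) (a b : ℕ) :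
    dff lam x (a + b) = dff lam x a * dff lam (x - a * lam) b := by
  rw [dff, prod_range_add]
  congr 1
  refine prod_congr rfl fun i _ => ?_
  push_cast
  ring

lemma dff_add_lam_succ (lam x : ℝ) (n : ℕ) :
    dff lam (x + lam) (n + 1) = (x + lam) * dff lam x n := by
  rw [add_comm n, dff_add]
  simp [dff]

lemma dff_eq_eval (lam : ℝ) (p : ℕ) :
    (fun x => dff lam x p) = (∏ i ∈ range p, (X - C ((i : ℝ) * lam))).eval := by
  ext x
  simp [dff, eval_prod]

lemma natDegree_prod_X_sub_C_le (lam : ℝ) (p : ℕ) :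
    (∏ i ∈ range p, (X - C ((i : ℝ) * lam))).natDegree ≤ p :=
  (natDegree_prod_le _ _).trans <| by
    simpa using sum_le_sum fun i (_ : i ∈ range p) => natDegree_X_sub_C_le ((i : ℝ) * lam)

lemma fwdDiff_iter_dff_zero (lam : ℝ) (p k : ℕ) :
    (fwdDiff 1)^[k] (fun x : ℝ => dff lam x p) 0 = k ! * dStirling lam p k := by
  rw [fwdDiff_iter_eq_sum_shift, dStirling, ← mul_assoc, mul_one_div_cancel (by positivity),
    one_mul]
  refine sum_congr rfl fun j _ => ?_
  simp

lemma dStirling_eq_zero_of_lt (lam : ℝ) {p k : ℕ} (h : p < k) : dStirling lam p k = 0 := by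
  have hdiff := congrFun (fwdDiff_iter_eq_zero_of_degree_lt
    ((natDegree_prod_X_sub_C_le lam p).trans_lt h)) 0
  rw [← dff_eq_eval, fwdDiff_iter_dff_zero] at hdiff
  simpa [Nat.factorial_ne_zero] using hdiff

lemma dff_natCast_eq_sum_dStirling (lam : ℝ) (p n : ℕ) :
    dff lam n p = ∑ k ∈ range (p + 1), dStirling lam p k * k ! * n.choose k := by
  have newton := shift_eq_sum_fwdDiff_iter 1 (fun x : ℝ => dff lam x p) n 0
  simp only [nsmul_eq_mul, mul_one, zero_add, fwdDiff_iter_dff_zero] at newton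
  rw [newton]
  calc _ = ∑ k ∈ range (n + 1), dStirling lam p k * k ! * n.choose k :=
        sum_congr rfl fun k _ => by ring
    _ = ∑ k ∈ range (n + p + 1), dStirling lam p k * k ! * n.choose k := by
        refine sum_subset (range_mono (by omega)) fun k _ hk => ?_
        rw [Nat.choose_eq_zero_of_lt (by simpa using hk)]
        simp
    _ = _ := by
        refine (sum_subset (range_mono (by omega : p + 1 ≤ n + p + 1)) fun k _ hk => ?_).symm
        rw [dStirling_eq_zero_of_lt lam (by simpa using hk)]
        simp

lemma sum_range_choose_eq_choose_succ (m k : ℕ) :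
    ∑ n ∈ range m, n.choose k = m.choose (k + 1) := by
  induction m with
  | zero => simp
  | succ m ih => rw [sum_range_succ, ih, Nat.choose_succ_succ', add_comm]

lemma sum_range_dff_natCast (lam : ℝ) (p m : ℕ) :
    ∑ n ∈ range m, dff lam n p =
      ∑ k ∈ range (p + 1), dStirling lam p k * k ! * m.choose (k + 1) := by
  simp_rw [dff_natCast_eq_sum_dStirling, sum_comm (s := range m), ← mul_sum,
    ← sum_range_choose_eq_choose_succ, Nat.cast_sum]

lemma abs_dff_succ_le (lam x : ℝ) (n : ℕ) :
    |dff lam x (n + 1)| ≤ |dff lam x n| * (|x| + n * |lam|) := by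
  rw [dff_succ, abs_mul]
  gcongr
  exact (abs_sub _ _).trans_eq (by rw [abs_mul, Nat.abs_cast])

lemma summable_pow_mul_abs_dff_div_factorial {lam : ℝ} (hl : |lam| < 1) (x : ℝ) (q : ℕ) :
    Summable fun n : ℕ => ((n : ℝ) + 1) ^ q * |dff lam x n| / n ! := by
  obtain ⟨r, hlr, hr⟩ := exists_between hl
  have hratio : Tendsto (fun n : ℕ => (1 + 1 / ((n : ℝ) + 1)) ^ q *
      (|lam| + (|x| - |lam|) * (1 / ((n : ℝ) + 1)))) atTop (𝓝 |lam|) := by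
    have h := tendsto_one_div_add_atTop_nhds_zero_nat (𝕜 := ℝ)
    simpa using (((tendsto_const_nhds (x := (1 : ℝ))).add h).pow q).mul
      ((tendsto_const_nhds (x := |lam|)).add (h.const_mul (|x| - |lam|)))
  refine summable_of_ratio_norm_eventually_le hr ?_
  filter_upwards [hratio.eventually_le_const hlr] with n hn
  rw [Real.norm_of_nonneg (by positivity), Real.norm_of_nonneg (by positivity)]
  calc ((↑(n + 1) : ℝ) + 1) ^ q * |dff lam x (n + 1)| / ↑(n + 1)!
      ≤ ((↑(n + 1) : ℝ) + 1) ^ q * (|dff lam x n| * (|x| + n * |lam|)) / ↑(n + 1)! := by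
        gcongr
        exact abs_dff_succ_le lam x n
    _ = (1 + 1 / ((n : ℝ) + 1)) ^ q * (|lam| + (|x| - |lam|) * (1 / ((n : ℝ) + 1))) *
        (((n : ℝ) + 1) ^ q * |dff lam x n| / n !) := by
        have hsucc : (1 : ℝ) + 1 / ((n : ℝ) + 1) = ((n : ℝ) + 2) / ((n : ℝ) + 1) := by
          field_simp
          ring
        rw [Nat.factorial_succ, hsucc, div_pow]
        push_cast
        field_simp
        ring
    _ ≤ r * (((n : ℝ) + 1) ^ q * |dff lam x n| / n !) := by gcongr

/-- The paper's `e_λ^x(1)`, equal to `(1 + λ)^{x/λ}` when `λ ≠ 0`. -/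
def dexpPow (lam x : ℝ) : ℝ := ∑' n : ℕ, dff lam x n / n !

lemma hasSum_dexpPow {lam : ℝ} (hl : |lam| < 1) (x : ℝ) :
    HasSum (fun n : ℕ => dff lam x n / n !) (dexpPow lam x) := by
  refine Summable.hasSum (.of_norm_bounded (summable_pow_mul_abs_dff_div_factorial hl x 0)
    fun n => by simp)

lemma dexp_one (lam : ℝ) : dexp lam 1 = dexpPow lam 1 := by
  simp [dexp, dexpPow]

lemma hasSum_of_shift_of_eq_zero {α : Type*} [AddCommGroup α] [TopologicalSpace α]
    [IsTopologicalAddGroup α] {f : ℕ → α} {a : α} (k : ℕ) (hf : ∀ m < k, f m = 0)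
    (h : HasSum (fun j => f (j + k)) a) : HasSum f a := by
  rw [← hasSum_nat_add_iff' k, sum_eq_zero fun m hm => hf m (mem_range.mp hm), sub_zero]
  exact h

/-- Sum over `n` of the recurrence `(x+λ)_{n+1}/(n+1)! = (x)_{n+1}/(n+1)! + λ (x)_n/n!`. -/
lemma dexpPow_add_lam {lam : ℝ} (hl : |lam| < 1) (x : ℝ) :
    dexpPow lam (x + lam) = (1 + lam) * dexpPow lam x := by
  have h := hasSum_dexpPow hl x
  have hsucc := ((hasSum_nat_add_iff' 1).mpr h).add (h.mul_left lam)
  refine (hasSum_dexpPow hl (x + lam)).unique ((hasSum_nat_add_iff' 1).mp ?_)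
  convert hsucc using 1
  · ext n
    rw [dff_add_lam_succ, dff_succ, Nat.factorial_succ]
    push_cast
    field_simp
    ring
  · simp [dff_zero]
    ring

lemma dexpPow_sub_mul_lam {lam : ℝ} (hl : |lam| < 1) (x : ℝ) (m : ℕ) :
    dexpPow lam (x - m * lam) = (1 + lam) ^ (-(m : ℤ)) * dexpPow lam x := by
  have hpos : 0 < 1 + lam := by linarith [neg_abs_le lam]
  rw [zpow_neg, zpow_natCast, eq_inv_mul_iff_mul_eq₀ (by positivity)]
  induction m with
  | zero => simp
  | succ m ih =>
    rw [← ih, pow_succ, mul_assoc, ← dexpPow_add_lam hl]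
    push_cast
    ring_nf

lemma hasSum_choose_mul_dff_div_factorial {lam : ℝ} (hl : |lam| < 1) (x : ℝ) (k : ℕ) :
    HasSum (fun m : ℕ => (m.choose k : ℝ) * (dff lam x m / m !))
      (dff lam x k / k ! * dexpPow lam (x - k * lam)) := by
  refine hasSum_of_shift_of_eq_zero k (fun m hm => by simp [Nat.choose_eq_zero_of_lt hm]) ?_
  refine ((hasSum_dexpPow hl (x - k * lam)).mul_left (dff lam x k / k !)).congr_fun fun j => ?_
  rw [add_comm j k, dff_add]
  have hfact : ((k + j).choose k : ℝ) * j ! * k ! = (k + j)! := by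
    rw [add_comm k j]
    exact_mod_cast Nat.add_choose_mul_factorial_mul_factorial j k
  have hchoose : ((k + j).choose k : ℝ) ≠ 0 := by
    exact_mod_cast (Nat.choose_pos (Nat.le_add_right k j)).ne'
  rw [← hfact]
  field_simp

lemma hasSum_dtail_one {lam : ℝ} (hl : |lam| < 1) (n : ℕ) :
    HasSum (fun m : ℕ => if n < m then dff lam 1 m / m ! else 0) (dtail lam 1 n) := by
  refine hasSum_of_shift_of_eq_zero (n + 1) (fun m hm => if_neg (by omega)) ?_
  simp only [show ∀ j, n < j + (n + 1) from fun j => by omega, if_true]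
  rw [dtail, dexp_one]
  simpa using (hasSum_nat_add_iff' (n + 1)).mpr (hasSum_dexpPow hl 1)

lemma abs_dff_natCast_le {lam : ℝ} (hl : |lam| < 1) (n p : ℕ) :
    |dff lam n p| ≤ ((n : ℝ) + p) ^ p := by
  rw [dff, abs_prod, ← card_range p, ← prod_const, card_range]
  refine prod_le_prod (fun _ _ => abs_nonneg _) fun i hi => ?_
  have hi : (i : ℝ) ≤ p := by exact_mod_cast (mem_range.mp hi).le
  calc |(n : ℝ) - i * lam| ≤ n + i * |lam| := (abs_sub _ _).trans_eq (by simp [abs_mul])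
    _ ≤ n + p := by nlinarith [abs_nonneg lam, Nat.cast_nonneg (α := ℝ) i]

lemma summable_dff_mul_dff_div_factorial {lam : ℝ} (hl : |lam| < 1) (x : ℝ) (p : ℕ) :
    Summable fun q : ℕ × ℕ =>
      if q.2 < q.1 then dff lam q.2 p * (dff lam x q.1 / q.1 !) else 0 := by
  have hfiber (m : ℕ) : ∀ n ∉ range m,
      |if n < m then dff lam n p * (dff lam x m / m !) else 0| = 0 := fun n hn => by
    simp [show ¬ n < m by simpa using hn]
  refine .of_abs ((summable_prod_of_nonneg fun _ => abs_nonneg _).mpr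
    ⟨fun m => summable_of_ne_finset_zero (hfiber m), ?_⟩)
  refine .of_nonneg_of_le (fun m => tsum_nonneg fun _ => abs_nonneg _) (fun m => ?_)
    ((summable_pow_mul_abs_dff_div_factorial hl x (p + 1)).mul_left (((p : ℝ) + 1) ^ p))
  have hbound : ∀ n ∈ range m, |if n < m then dff lam n p * (dff lam x m / m !) else 0|
      ≤ (((p : ℝ) + 1) * (m + 1)) ^ p * (|dff lam x m| / m !) := fun n hn => by
    have hnm : (n : ℝ) + p ≤ ((p : ℝ) + 1) * (m + 1) := by
      have : (n : ℝ) ≤ m := by exact_mod_cast (mem_range.mp hn).le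
      nlinarith [Nat.cast_nonneg (α := ℝ) p]
    rw [if_pos (mem_range.mp hn), abs_mul, abs_div, Nat.abs_cast]
    gcongr
    exact (abs_dff_natCast_le hl n p).trans (by gcongr)
  rw [tsum_eq_sum (hfiber m)]
  calc _ ≤ ∑ n ∈ range m, (((p : ℝ) + 1) * (m + 1)) ^ p * (|dff lam x m| / m !) :=
        sum_le_sum hbound
    _ ≤ ((m : ℝ) + 1) * ((((p : ℝ) + 1) * (m + 1)) ^ p * (|dff lam x m| / m !)) := by
        rw [sum_const, card_range, nsmul_eq_mul]
        gcongr
        linarith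
    _ = ((p : ℝ) + 1) ^ p * (((m : ℝ) + 1) ^ (p + 1) * |dff lam x m| / m !) := by
        rw [mul_pow, pow_succ]
        ring

lemma hasSum_sum_range_dff_mul {lam : ℝ} (hl : |lam| < 1) (p : ℕ) :
    HasSum (fun m : ℕ => (∑ n ∈ range m, dff lam n p) * (dff lam 1 m / m !))
      (∑ k ∈ range (p + 1), dStirling lam p k * (dff lam 1 (k + 1) / (k + 1)) *
        (1 + lam) ^ (-(k + 1 : ℤ)) * dexp lam 1) := by
  simp_rw [sum_range_dff_natCast, sum_mul]
  refine hasSum_sum fun k _ => ?_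
  have h := (hasSum_choose_mul_dff_div_factorial hl 1 (k + 1)).mul_left (dStirling lam p k * k !)
  rw [dexpPow_sub_mul_lam hl, ← dexp_one] at h
  have hval : dStirling lam p k * k ! * (dff lam 1 (k + 1) / (k + 1)! *
      ((1 + lam) ^ (-((k + 1 : ℕ) : ℤ)) * dexp lam 1)) = dStirling lam p k *
      (dff lam 1 (k + 1) / (k + 1)) * (1 + lam) ^ (-(k + 1 : ℤ)) * dexp lam 1 := by
    rw [Nat.factorial_succ]
    push_cast
    field_simp
  rw [← hval]
  exact h.congr_fun fun m => by ring

theorem stmt_9 (p : ℕ) (lam : ℝ) (hl : |lam| < 1) :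
    HasSum (fun n : ℕ => dff lam n p * dtail lam 1 n)
      (∑ k ∈ Finset.range (p + 1), dStirling lam p k * (dff lam 1 (k + 1) / (k + 1)) *
        (1 + lam) ^ (-(k + 1 : ℤ)) * dexp lam 1) := by
  set G : ℕ × ℕ → ℝ := fun q =>
    if q.2 < q.1 then dff lam q.2 p * (dff lam 1 q.1 / q.1 !) else 0
  have hG := (summable_dff_mul_dff_div_factorial hl 1 p).hasSum
  have hrow (m : ℕ) :
      HasSum (fun n => G (m, n)) ((∑ n ∈ range m, dff lam n p) * (dff lam 1 m / m !)) := by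
    have h := hasSum_sum_of_ne_finset_zero (L := .unconditional ℕ) (f := fun n => G (m, n))
      (s := range m) fun n hn => if_neg (by simpa using hn)
    rw [sum_congr rfl fun n hn => if_pos (mem_range.mp hn)] at h
    rwa [sum_mul]
  have hcol (n : ℕ) : HasSum (fun m => G (m, n)) (dff lam n p * dtail lam 1 n) := by
    simpa [G, mul_ite] using (hasSum_dtail_one hl n).mul_left (dff lam n p)
  have hcols := ((Equiv.prodComm ℕ ℕ).hasSum_iff (f := G).mpr hG).prod_fiberwise hcol
  rwa [(hG.prod_fiberwise hrow).unique (hasSum_sum_range_dff_mul hl p)] at hcols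
end
end

section
/- For every natural number k, every real λ, and every real y with k·|λy| < 1 and |λy| < 1, one has Σ_{n=0}^∞ S_2(n,k) T_n(y) = (1/k!) Σ_{j=0}^k C(k,j) (−1)^{k−j} F_j(y), where F_j(y) = (e_λ(jy) − e_λ(y))/(j − 1) for j ≠ 1 and F_1(y) = (y/(1+λy)) e_λ(y) (the limiting value at j = 1), S_2(n,k) denotes the Stirling numbers of the second kind, and the series on the left converges. -/
noncomputable section

/-- Stirling number of the second kind, as a real number:
`S_2(n,k) = (1/k!) ∑_{j=0}^k (-1)^{k-j} C(k,j) j^n`. -/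
def stirling2 (n k : ℕ) : ℝ :=
  (1 / (k.factorial : ℝ)) *
    ∑ j ∈ Finset.range (k + 1), (-1 : ℝ) ^ (k - j) * (k.choose j : ℝ) * (j : ℝ) ^ n


/-! With `a_M = (1)_{M,λ} y^M / M!`, expanding `S_2(n,k)` reduces the claim to
`∑_n j^n T_n(y) = F_j(y)` for `0 ≤ j ≤ k`. Since `T_n = ∑_{M>n} a_M`, swapping the order of
summation gives `∑_M a_M (1 + j + ⋯ + j^(M-1))`, which is `(e_λ(jy) - e_λ(y))/(j - 1)` for
`j ≠ 1` and `∑_M M a_M` for `j = 1`. The recurrence `(M+1) a_{M+1} = y (1 - Mλ) a_M` turns the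
latter into `B = y e_λ(y) - λ y B`, and also gives absolute convergence by the ratio test, the
ratio tending to `|λ y|` (and `|λ j y| ≤ k |λ y| < 1`). -/

open Filter Finset Topology

theorem summable_of_succ_eq_mul {f g : ℕ → ℝ} {l : ℝ} (hl : l < 1)
    (hg : Tendsto (fun n => |g n|) atTop (𝓝 l)) (hfg : ∀ n, f (n + 1) = g n * f n) :
    Summable f := by
  refine summable_of_ratio_norm_eventually_le (r := (l + 1) / 2) (by linarith) ?_
  filter_upwards [hg.eventually_lt_const (show l < (l + 1) / 2 by linarith)] with n hn
  rw [hfg, norm_mul, Real.norm_eq_abs (g n)]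
  exact mul_le_mul_of_nonneg_right hn.le (norm_nonneg _)

theorem hasSum_ite_lt_mul (a c : ℕ → ℝ) (M : ℕ) :
    HasSum (fun n => if n < M then a M * c n else 0) (a M * ∑ n ∈ range M, c n) := by
  have h : HasSum (fun n => if n < M then a M * c n else 0)
      (∑ n ∈ range M, if n < M then a M * c n else 0) :=
    hasSum_sum_of_ne_finset_zero fun n hn => if_neg (by simpa using hn)
  rwa [sum_congr rfl fun n hn => if_pos (mem_range.mp hn), ← mul_sum] at h

theorem hasSum_mul_tail {a c t : ℕ → ℝ} {s : ℝ}
    (ht : ∀ n, HasSum (fun m => a (m + (n + 1))) (t n))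
    (habs : Summable fun M => |a M| * ∑ n ∈ range M, |c n|)
    (hs : HasSum (fun M => a M * ∑ n ∈ range M, c n) s) :
    HasSum (fun n => c n * t n) s := by
  set F : ℕ × ℕ → ℝ := fun p => if p.2 < p.1 then a p.1 * c p.2 else 0
  have hF : Summable F := by
    have hrow M := hasSum_ite_lt_mul (fun M => |a M|) (fun n => |c n|) M
    have habsF : (fun p => |F p|) = fun p => if p.2 < p.1 then |a p.1| * |c p.2| else 0 := by
      simp only [F, apply_ite abs, abs_zero, abs_mul]
    rw [← summable_abs_iff, habsF, summable_prod_of_nonneg fun p => by positivity]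
    exact ⟨fun M => (hrow M).summable, habs.congr fun M => (hrow M).tsum_eq.symm⟩
  have hFs : HasSum F s := by
    have h := hF.hasSum
    rwa [(h.prod_fiberwise fun M => hasSum_ite_lt_mul a c M).unique hs] at h
  refine ((Equiv.prodComm ℕ ℕ).hasSum_iff.mpr hFs).prod_fiberwise fun n => ?_
  show HasSum (fun M => if n < M then a M * c n else 0) (c n * t n)
  rw [← hasSum_nat_add_iff' (n + 1), sum_eq_zero fun i hi => if_neg (by simpa using hi),
    sub_zero]
  simp only [show ∀ m, n < m + (n + 1) by omega, if_true, mul_comm _ (c n)]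
  exact (ht n).mul_left (c n)

theorem sum_range_pow_le {x : ℝ} (hx : 0 ≤ x) (M : ℕ) :
    ∑ n ∈ range M, x ^ n ≤ M * (x ^ M + 1) := by
  calc ∑ n ∈ range M, x ^ n ≤ ∑ _n ∈ range M, (x ^ M + 1) := by
        refine sum_le_sum fun n hn => ?_
        rcases le_total x 1 with h | h
        · linarith [pow_le_one₀ (n := n) hx h, pow_nonneg hx M]
        · linarith [pow_le_pow_right₀ h (mem_range.mp hn).le]
    _ = M * (x ^ M + 1) := by rw [sum_const, card_range, nsmul_eq_mul]

def dexpTerm (lam y : ℝ) (M : ℕ) : ℝ := dff lam 1 M * y ^ M / M.factorial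

theorem dexpTerm_succ (lam y : ℝ) (M : ℕ) :
    ((M : ℝ) + 1) * dexpTerm lam y (M + 1) = y * (1 - M * lam) * dexpTerm lam y M := by
  have h : dff lam 1 (M + 1) = dff lam 1 M * (1 - M * lam) := prod_range_succ _ _
  simp only [dexpTerm, h, Nat.factorial_succ, Nat.cast_mul, pow_succ]
  push_cast
  field_simp

theorem dexpTerm_mul (lam x y : ℝ) (M : ℕ) :
    dexpTerm lam (x * y) M = x ^ M * dexpTerm lam y M := by
  simp only [dexpTerm, mul_pow]
  ring

theorem summable_succ_mul_dexpTerm {lam z : ℝ} (hz : |lam * z| < 1) :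
    Summable fun M : ℕ => ((M : ℝ) + 1) * dexpTerm lam z M := by
  have h0 := tendsto_one_div_add_atTop_nhds_zero_nat (𝕜 := ℝ)
  have h1 := tendsto_natCast_div_add_atTop (1 : ℝ)
  -- the ratio `(M + 2) z (1 - M λ) / (M + 1) ^ 2` of consecutive terms
  have hlim : Tendsto (fun M : ℕ => z * (1 + 1 / ((M : ℝ) + 1)) *
      (1 / ((M : ℝ) + 1) - lam * (M / (M + 1)))) atTop (𝓝 (-(lam * z))) := by
    convert (tendsto_const_nhds.mul (tendsto_const_nhds.add h0)).mul
      (h0.sub (h1.const_mul lam)) using 2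
    ring
  refine summable_of_succ_eq_mul hz (by simpa only [abs_neg] using hlim.abs) fun M => ?_
  push_cast
  field_simp
  linear_combination dexpTerm_succ lam z M

theorem summable_dexpTerm {lam z : ℝ} (hz : |lam * z| < 1) : Summable (dexpTerm lam z) :=
  (summable_succ_mul_dexpTerm hz).norm.of_norm_bounded fun M => by
    rw [norm_mul, Real.norm_of_nonneg (by positivity : (0 : ℝ) ≤ M + 1)]
    exact le_mul_of_one_le_left (norm_nonneg _) (by linarith [(M.cast_nonneg : (0 : ℝ) ≤ M)])

theorem summable_natCast_mul_dexpTerm {lam z : ℝ} (hz : |lam * z| < 1) :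
    Summable fun M : ℕ => (M : ℝ) * dexpTerm lam z M :=
  ((summable_succ_mul_dexpTerm hz).sub (summable_dexpTerm hz)).congr fun M => by ring

theorem hasSum_dexpTerm {lam z : ℝ} (hz : |lam * z| < 1) :
    HasSum (dexpTerm lam z) (dexp lam z) :=
  (summable_dexpTerm hz).hasSum

theorem hasSum_dexpTerm_add {lam y : ℝ} (hy : |lam * y| < 1) (n : ℕ) :
    HasSum (fun m => dexpTerm lam y (m + (n + 1))) (dtail lam y n) :=
  (hasSum_nat_add_iff' (n + 1)).mpr (hasSum_dexpTerm hy)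

theorem hasSum_natCast_mul_dexpTerm {lam y : ℝ} (hy : |lam * y| < 1) :
    HasSum (fun M : ℕ => (M : ℝ) * dexpTerm lam y M) (y / (1 + lam * y) * dexp lam y) := by
  set B := ∑' M : ℕ, (M : ℝ) * dexpTerm lam y M
  have hB : HasSum (fun M : ℕ => (M : ℝ) * dexpTerm lam y M) B :=
    (summable_natCast_mul_dexpTerm hy).hasSum
  have hshift : HasSum (fun M : ℕ => ((M : ℝ) + 1) * dexpTerm lam y (M + 1)) B := by
    simpa using (hasSum_nat_add_iff' 1).mpr hB
  have hrec : HasSum (fun M : ℕ => ((M : ℝ) + 1) * dexpTerm lam y (M + 1))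
      (y * dexp lam y - lam * y * B) :=
    ((hasSum_dexpTerm hy).mul_left y).sub (hB.mul_left (lam * y)) |>.congr_fun fun M => by
      rw [dexpTerm_succ]; ring
  have hpos : 0 < 1 + lam * y := by linarith [neg_abs_le (lam * y)]
  have hBval : B = y * dexp lam y / (1 + lam * y) :=
    eq_div_of_mul_eq hpos.ne' (by linear_combination hshift.unique hrec)
  rwa [div_mul_eq_mul_div, ← hBval]

theorem hasSum_pow_mul_dtail {lam y : ℝ} (j : ℕ) (hj : |lam * (j * y)| < 1)
    (hy : |lam * y| < 1) :
    HasSum (fun n : ℕ => (j : ℝ) ^ n * dtail lam y n)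
      (if j = 1 then y / (1 + lam * y) * dexp lam y
       else (dexp lam (j * y) - dexp lam y) / ((j : ℝ) - 1)) := by
  refine hasSum_mul_tail (hasSum_dexpTerm_add hy) ?_ ?_
  · refine Summable.of_nonneg_of_le (fun M => by positivity) (fun M => ?_)
      ((summable_natCast_mul_dexpTerm hj).abs.add (summable_natCast_mul_dexpTerm hy).abs)
    simp only [abs_pow, Nat.abs_cast, abs_mul, dexpTerm_mul]
    calc |dexpTerm lam y M| * ∑ n ∈ range M, (j : ℝ) ^ n
        ≤ |dexpTerm lam y M| * (M * ((j : ℝ) ^ M + 1)) :=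
          mul_le_mul_of_nonneg_left (sum_range_pow_le j.cast_nonneg M) (abs_nonneg _)
      _ = _ := by ring
  split_ifs with hj1
  · subst hj1
    simpa [mul_comm] using hasSum_natCast_mul_dexpTerm hy
  · have hj1' : (j : ℝ) ≠ 1 := by exact_mod_cast hj1
    refine ((hasSum_dexpTerm hj).sub (hasSum_dexpTerm hy)).div_const ((j : ℝ) - 1)
      |>.congr_fun fun M => ?_
    rw [geom_sum_eq hj1', dexpTerm_mul]
    ring

theorem stmt_11 (k : ℕ) (lam y : ℝ) (hk : (k : ℝ) * |lam * y| < 1) (hy : |lam * y| < 1) :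
    HasSum (fun n : ℕ => stirling2 n k * dtail lam y n)
      ((1 / (k.factorial : ℝ)) * ∑ j ∈ Finset.range (k + 1),
        (k.choose j : ℝ) * (-1 : ℝ) ^ (k - j) *
          (if j = 1 then y / (1 + lam * y) * dexp lam y
           else (dexp lam (j * y) - dexp lam y) / ((j : ℝ) - 1))) := by
  have hj : ∀ j ∈ range (k + 1), |lam * (j * y)| < 1 := fun j hjmem => by
    have hjk : (j : ℝ) ≤ k := by exact_mod_cast Nat.lt_succ_iff.mp (mem_range.mp hjmem)
    rw [mul_left_comm, abs_mul, Nat.abs_cast]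
    nlinarith [abs_nonneg (lam * y)]
  rw [mul_sum]
  refine hasSum_sum (fun j hj' => ((hasSum_pow_mul_dtail j (hj j hj') hy).mul_left
    ((k.choose j : ℝ) * (-1 : ℝ) ^ (k - j))).mul_left (1 / (k.factorial : ℝ)))
    |>.congr_fun fun n => ?_
  rw [stirling2, mul_assoc, sum_mul, mul_sum]
  refine sum_congr rfl fun j _ => ?_
  ring
end
end
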